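/- Deterministic Scheffé-tournament guarantee, misspecified case: suppose m : F → ℝ satisfies |m(f) − E_{d^E} f| ≤ ε for all f ∈ F, and let π̂ ∈ Π be any minimizer of π ↦ max_{f∈F} ( E_{d^π} f − m(f) ). Then ‖d^{π̂} − d^E‖₁ ≤ 3 · min_{π∈Π} ‖d^π − d^E‖₁ + 2ε. -/
import Mathlib


/-!
STATEMENT 3: Deterministic Scheffé-tournament guarantee, misspecified case.
-/

open Finset

/-- `p` is a distribution on the finite set `S`: values in `[0,1]` summing to `1`. -/
def IsDist {S : Type*} [Fintype S] (p : S → ℝ) : Prop :=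
  (∀ s, 0 ≤ p s ∧ p s ≤ 1) ∧ ∑ s, p s = 1

/-- Expectation `E_p f = ∑_s p(s) f(s)`. -/
def expct {S : Type*} [Fintype S] (p f : S → ℝ) : ℝ := ∑ s, p s * f s

/-- L¹ distance `‖p − q‖₁ = ∑_s |p(s) − q(s)|`. -/
def l1dist {S : Type*} [Fintype S] (p q : S → ℝ) : ℝ := ∑ s, |p s - q s|

/-- Witness function `f_{p,q}(s) = 1` if `p(s) ≥ q(s)`, else `−1`. -/
noncomputable def witness {S : Type*} (p q : S → ℝ) (s : S) : ℝ :=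
  if q s ≤ p s then 1 else -1

/-- The Scheffé-tournament objective with approximate expectations `m`:
`max_{f ∈ F} ( E_{d^π} f − m(f) )`, where `F = { f_{d^a, d^b} : a ≠ b }`. -/
noncomputable def scheffeObj {S P : Type*} [Fintype S] [Fintype P]
    (d : P → S → ℝ) (m : (S → ℝ) → ℝ) (π : P) : ℝ :=
  sSup {v : ℝ | ∃ a b : P, a ≠ b ∧
    v = expct (d π) (witness (d a) (d b)) - m (witness (d a) (d b))}

lemma abs_witness {S : Type*} (p q : S → ℝ) (s : S) : |witness p q s| ≤ 1 := by
  unfold witness; split <;> simp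

lemma expct_witness_sub {S : Type*} [Fintype S] (p q : S → ℝ) :
    expct p (witness p q) - expct q (witness p q) = l1dist p q := by
  unfold expct l1dist witness
  rw [← Finset.sum_sub_distrib]
  refine Finset.sum_congr rfl fun s _ => ?_
  by_cases h : q s ≤ p s
  · rw [if_pos h, abs_of_nonneg (by linarith)]; ring
  · rw [if_neg h, abs_of_neg (by push_neg at h; linarith)]; ring

lemma abs_expct_sub {S : Type*} [Fintype S] (p r f : S → ℝ) (hf : ∀ s, |f s| ≤ 1) :
    |expct p f - expct r f| ≤ l1dist p r := by
  unfold expct l1dist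
  rw [← Finset.sum_sub_distrib]
  refine (Finset.abs_sum_le_sum_abs _ _).trans (Finset.sum_le_sum fun s _ => ?_)
  rw [← sub_mul, abs_mul]
  calc |p s - r s| * |f s| ≤ |p s - r s| * 1 :=
        mul_le_mul_of_nonneg_left (hf s) (abs_nonneg _)
    _ = |p s - r s| := mul_one _

lemma l1_triangle {S : Type*} [Fintype S] (p q r : S → ℝ) :
    l1dist p r ≤ l1dist p q + l1dist q r := by
  unfold l1dist
  rw [← Finset.sum_add_distrib]
  exact Finset.sum_le_sum fun s _ => abs_sub_le _ _ _

lemma l1_nonneg {S : Type*} [Fintype S] (p q : S → ℝ) : 0 ≤ l1dist p q :=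
  Finset.sum_nonneg fun s _ => abs_nonneg _

lemma l1_comm {S : Type*} [Fintype S] (p q : S → ℝ) : l1dist p q = l1dist q p := by
  unfold l1dist; exact Finset.sum_congr rfl fun s _ => abs_sub_comm _ _

/-- Deterministic Scheffé-tournament guarantee, misspecified case: if `m` is an
`ε`-accurate estimate of `E_{d^E} f` for every witness function `f ∈ F`, and `π̂`
minimizes `π ↦ max_{f ∈ F} (E_{d^π} f − m(f))`, then
`‖d^{π̂} − d^E‖₁ ≤ 3 · min_{π∈Π} ‖d^π − d^E‖₁ + 2ε`. -/
theorem scheffe_misspecified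
    {S P : Type*} [Fintype S] [Nonempty S] [Fintype P]
    (hP : 2 ≤ Fintype.card P)
    (d : P → S → ℝ) (hd : ∀ π, IsDist (d π))
    (dE : S → ℝ) (hdE : IsDist dE)
    (ε : ℝ) (hε : 0 ≤ ε)
    (m : (S → ℝ) → ℝ)
    (hm : ∀ a b : P, a ≠ b →
      |m (witness (d a) (d b)) - expct dE (witness (d a) (d b))| ≤ ε)
    (πhat : P)
    (hmin : ∀ π : P, scheffeObj d m πhat ≤ scheffeObj d m π) :
    l1dist (d πhat) dE ≤ 3 * (⨅ π : P, l1dist (d π) dE) + 2 * ε := by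
  have hPne : Nonempty P := Fintype.card_pos_iff.mp (by omega)
  obtain ⟨πs, hπs⟩ := Finite.exists_min (fun π => l1dist (d π) dE)
  set OPT := l1dist (d πs) dE with hOPTdef
  have hInf : OPT ≤ ⨅ π : P, l1dist (d π) dE := le_ciInf hπs
  have hOPT0 : 0 ≤ OPT := l1_nonneg _ _
  by_cases hne : πhat = πs
  · rw [hne]; linarith
  · set f := witness (d πhat) (d πs) with hf
    -- bound on scheffeObj at πs
    have h5 : scheffeObj d m πs ≤ OPT + ε := by
      apply Real.sSup_le _ (by linarith)
      rintro v ⟨a, b, hab, rfl⟩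
      have h1 : |expct (d πs) (witness (d a) (d b)) - expct dE (witness (d a) (d b))|
          ≤ l1dist (d πs) dE := abs_expct_sub _ _ _ (abs_witness _ _)
      have h2 := hm a b hab
      have := abs_le.mp h1
      have := abs_le.mp h2
      linarith [this.1, this.2]
    -- element ≤ scheffeObj at πhat
    have hBdd : BddAbove {v : ℝ | ∃ a b : P, a ≠ b ∧
        v = expct (d πhat) (witness (d a) (d b)) - m (witness (d a) (d b))} := by
      apply Set.Finite.bddAbove
      apply Set.Finite.subset (Set.finite_range (fun ab : P × P =>
        expct (d πhat) (witness (d ab.1) (d ab.2)) - m (witness (d ab.1) (d ab.2))))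
      rintro v ⟨a, b, _, rfl⟩
      exact ⟨(a, b), rfl⟩
    have h3 : expct (d πhat) f - m f ≤ scheffeObj d m πhat :=
      le_csSup hBdd ⟨πhat, πs, hne, rfl⟩
    have h4 : scheffeObj d m πhat ≤ scheffeObj d m πs := hmin πs
    have h6 : |m f - expct dE f| ≤ ε := hm πhat πs hne
    have h7 : |expct dE f - expct (d πs) f| ≤ l1dist dE (d πs) :=
      abs_expct_sub _ _ _ (abs_witness _ _)
    have h8 : l1dist dE (d πs) = OPT := l1_comm _ _
    have h9 : expct (d πhat) f - expct (d πs) f = l1dist (d πhat) (d πs) :=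
      expct_witness_sub _ _
    have h10 : l1dist (d πhat) dE ≤ l1dist (d πhat) (d πs) + OPT := l1_triangle _ _ _
    have e6 := abs_le.mp h6
    have e7 := abs_le.mp h7
    have : l1dist (d πhat) dE ≤ 3 * OPT + 2 * ε := by linarith [e6.1, e6.2, e7.1, e7.2]
    linarith
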